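/- Let G be a finite simple connected triangle-free graph of minimum degree at least 3 with a star-cover {S_1, …, S_m} in which every star has size at least 6. Let T be a tree in G of maximal size (number of edges) subject to: (1) T contains no two adjacent vertices of degree 2 in T; (2) the vertex set of G − V(T) is the union of the vertex sets of the stars S_i for i in some subset I of {1, …, m}; and (3) whenever a leaf v of T is joined in G to a vertex of G − V(T), the neighbour of v in T has degree at least 5 in T. If some vertex v of T has a neighbour u in G with u ∉ V(T), then v has degree 1 in T and u has degree 1 in the graph G − V(T). -/

import Mathlib

open SimpleGraph

/-- The degree of a vertex `v` in a simple graph `H`. -/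
noncomputable def gdeg {V : Type} (H : SimpleGraph V) (v : V) : ℕ :=
  Nat.card (H.neighborSet v)

/-- The degree of a vertex `v` in a subgraph `H` of `G`. -/
noncomputable def subdeg {V : Type} {G : SimpleGraph V} (H : G.Subgraph) (v : V) : ℕ :=
  Nat.card (H.neighborSet v)

/-- A subgraph is a star if it is a tree with at most one vertex of degree greater than 1. -/
def IsStar {V : Type} {G : SimpleGraph V} (H : G.Subgraph) : Prop :=
  H.coe.IsTree ∧ {v ∈ H.verts | 1 < subdeg H v}.Subsingleton

/-!
If `a ∈ V(T)` has a neighbour `u` outside `T`, then `u` lies in a star `S_i` disjoint from `T`,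
with centre `c` say. Gluing `S_i` to `T` along the edge `au` gives a larger tree which still
satisfies (1)–(3), unless `a` and `u` both get degree 2, i.e. `a` is a leaf of `T` and `u ≠ c`.
If `u` had a neighbour `x ≠ c` outside `T`, then `x ∉ S_i` (else `u x c` is a triangle), so `x`
lies in another star `S_j`, and gluing the tree `S_i + ux + S_j` to `T` along `au` again gives a
larger tree satisfying (1)–(3): now `u` has degree 3, and a leaf `a` of `T` hangs off a vertex of
degree at least 5 by (3).
-/

namespace Set

variable {α ι : Type*} {s : ι → Set α} {A : Set α} {I : Set ι}

lemma subset_compl_of_compl_eq_biUnion (hs : Pairwise fun i j => Disjoint (s i) (s j))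
    (hA : Aᶜ = ⋃ i ∈ I, s i) {k : ι} {x : α} (hxk : x ∈ s k) (hxA : x ∉ A) : s k ⊆ Aᶜ := by
  obtain ⟨i, hi, hxi⟩ := mem_iUnion₂.mp (show x ∈ ⋃ i ∈ I, s i from hA ▸ hxA)
  obtain rfl : i = k := by_contra fun hik => disjoint_left.mp (hs hik) hxi hxk
  exact hA ▸ subset_biUnion_of_mem hi

lemma exists_compl_union_eq_biUnion (hs : Pairwise fun i j => Disjoint (s i) (s j))
    (hA : Aᶜ = ⋃ i ∈ I, s i) {B : Set α} (hB : ∃ J : Set ι, B = ⋃ j ∈ J, s j) :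
    ∃ I' : Set ι, (A ∪ B)ᶜ = ⋃ i ∈ I', s i := by
  obtain ⟨J, rfl⟩ := hB
  refine ⟨I \ J, ?_⟩
  rw [compl_union, hA]
  ext x
  simp only [mem_inter_iff, mem_compl_iff, mem_iUnion₂, mem_sdiff, not_exists, exists_prop]
  constructor
  · rintro ⟨⟨i, hi, hxi⟩, hxJ⟩
    exact ⟨i, ⟨hi, fun hiJ => hxJ i ⟨hiJ, hxi⟩⟩, hxi⟩
  · rintro ⟨i, ⟨hi, hiJ⟩, hxi⟩
    refine ⟨⟨i, hi, hxi⟩, fun j ⟨hj, hxj⟩ => ?_⟩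
    obtain rfl : j = i := by_contra fun hji => disjoint_left.mp (hs hji) hxj hxi
    exact hiJ hj

end Set

lemma SimpleGraph.Walk.IsPath.adj_or_exists_adj_adj {W : Type*} {X : SimpleGraph W} {u w : W}
    {p : X.Walk u w} (hp : p.IsPath) (hne : u ≠ w) :
    X.Adj u w ∨ ∃ y z, X.Adj u y ∧ X.Adj y z ∧ z ≠ u := by
  cases p with
  | nil => exact absurd rfl hne
  | cons h t =>
    cases t with
    | nil => exact Or.inl h
    | cons h' t' =>
      refine Or.inr ⟨_, _, h, h', fun hzu => ?_⟩
      have hnd := hp.support_nodup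
      simp only [Walk.support_cons, List.nodup_cons, List.mem_cons] at hnd
      exact hnd.1 (Or.inr (hzu ▸ t'.start_mem_support))

namespace SimpleGraph.Subgraph

variable {V : Type} {G : SimpleGraph V}

lemma subdeg_eq_ncard (H : G.Subgraph) (v : V) : subdeg H v = (H.neighborSet v).ncard :=
  Nat.card_coe_set_eq _

lemma subdeg_mono [Finite V] {H H' : G.Subgraph} (h : H ≤ H') (v : V) :
    subdeg H v ≤ subdeg H' v := by
  simp only [subdeg_eq_ncard]
  exact Set.ncard_le_ncard (neighborSet_subset_of_subgraph h v)

lemma ncard_edgeSet_coe (H : G.Subgraph) : Nat.card H.coe.edgeSet = H.edgeSet.ncard := by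
  rw [← H.image_coe_edgeSet_coe, Set.ncard_image_of_injective _
    (Sym2.map.injective Subtype.val_injective), Nat.card_coe_set_eq]

lemma coe_isTree_iff [Finite V] (H : G.Subgraph) :
    H.coe.IsTree ↔ H.Connected ∧ H.edgeSet.ncard + 1 = H.verts.ncard := by
  rw [isTree_iff_connected_and_card, ncard_edgeSet_coe, Nat.card_coe_set_eq,
    Subgraph.connected_iff']

lemma disjoint_edgeSet_of_disjoint_verts {H K : G.Subgraph} (h : Disjoint H.verts K.verts) :
    Disjoint H.edgeSet K.edgeSet := by
  refine Set.disjoint_left.mpr fun e heH heK => ?_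
  induction e using Sym2.ind with
  | h x y => exact Set.disjoint_left.mp h (H.edge_vert heH) (K.edge_vert heK)

lemma one_lt_subdeg_of_adj_of_adj [Finite V] {H : G.Subgraph} {x y z : V} (hxy : H.Adj y x)
    (hyz : H.Adj y z) (hne : z ≠ x) : 1 < subdeg H y := by
  rw [subdeg_eq_ncard]
  exact (Set.one_lt_ncard (Set.toFinite _)).mpr ⟨x, hxy, z, hyz, hne.symm⟩

lemma adj_or_exists_one_lt_subdeg [Finite V] {H : G.Subgraph} (hH : H.Connected) {u w : V}
    (hu : u ∈ H.verts) (hw : w ∈ H.verts) (hne : u ≠ w) :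
    H.Adj u w ∨ ∃ y, H.Adj u y ∧ 1 < subdeg H y := by
  obtain ⟨p, hp⟩ := (hH.preconnected ⟨u, hu⟩ ⟨w, hw⟩).exists_isPath
  rcases hp.adj_or_exists_adj_adj (fun h => hne (congrArg Subtype.val h)) with
    h | ⟨y, z, huy, hyz, hzu⟩
  · exact Or.inl h
  · exact Or.inr ⟨y, huy, one_lt_subdeg_of_adj_of_adj huy.symm hyz
      fun h => hzu (Subtype.ext h)⟩

section JoinByEdge

variable {H K : G.Subgraph} {p q : V} (hpq : G.Adj p q)

def joinByEdge (H K : G.Subgraph) (hpq : G.Adj p q) : G.Subgraph :=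
  H ⊔ G.subgraphOfAdj hpq ⊔ K

lemma joinByEdge_comm : H.joinByEdge K hpq = K.joinByEdge H hpq.symm := by
  rw [joinByEdge, joinByEdge, sup_comm, sup_comm H, sup_assoc, subgraphOfAdj_symm]

lemma joinByEdge_adj {x y : V} :
    (H.joinByEdge K hpq).Adj x y ↔ H.Adj x y ∨ s(p, q) = s(x, y) ∨ K.Adj x y := by
  simp only [joinByEdge, sup_adj, subgraphOfAdj_adj, or_assoc]

lemma left_le_joinByEdge : H ≤ H.joinByEdge K hpq := le_sup_left.trans le_sup_left

lemma right_le_joinByEdge : K ≤ H.joinByEdge K hpq := le_sup_right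

lemma joinByEdge_verts (hp : p ∈ H.verts) (hq : q ∈ K.verts) :
    (H.joinByEdge K hpq).verts = H.verts ∪ K.verts := by
  ext v
  simp only [joinByEdge, verts_sup, subgraphOfAdj_verts, Set.mem_union, Set.mem_insert_iff,
    Set.mem_singleton_iff]
  grind

lemma joinByEdge_isTree [Finite V] (hp : p ∈ H.verts) (hq : q ∈ K.verts)
    (hHK : Disjoint H.verts K.verts) (hH : H.coe.IsTree) (hK : K.coe.IsTree) :
    (H.joinByEdge K hpq).coe.IsTree := by
  rw [coe_isTree_iff] at hH hK ⊢
  have hqH : q ∉ H.verts := Set.disjoint_right.mp hHK hq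
  have hpK : p ∉ K.verts := Set.disjoint_left.mp hHK hp
  refine ⟨connected_sup (connected_sup hH.1.preconnected
    (subgraphOfAdj_connected hpq).preconnected ⟨p, hp, by simp⟩).preconnected
    hK.1.preconnected ⟨q, Or.inr (by simp), hq⟩, ?_⟩
  have hedges : (H.joinByEdge K hpq).edgeSet = insert s(p, q) H.edgeSet ∪ K.edgeSet := by
    simp only [joinByEdge, edgeSet_sup, edgeSet_subgraphOfAdj, Set.union_singleton]
  rw [hedges, joinByEdge_verts hpq hp hq, Set.ncard_union_eq hHK,
    Set.ncard_union_eq, Set.ncard_insert_of_notMem (fun h => hqH (H.edge_vert h.symm)),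
    ← hH.2, ← hK.2]
  · omega
  exact Set.disjoint_insert_left.mpr ⟨fun h => hpK (K.edge_vert h),
    disjoint_edgeSet_of_disjoint_verts hHK⟩

lemma ncard_edgeSet_lt_joinByEdge [Finite V] (hq : q ∈ K.verts)
    (hHK : Disjoint H.verts K.verts) :
    H.edgeSet.ncard < (H.joinByEdge K hpq).edgeSet.ncard := by
  refine Set.ncard_lt_ncard ⟨edgeSet_mono (left_le_joinByEdge hpq), fun h => ?_⟩
    (Set.toFinite _)
  have : s(p, q) ∈ H.edgeSet := h (by simp [joinByEdge])
  exact Set.disjoint_right.mp hHK hq (H.edge_vert this.symm)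

lemma neighborSet_joinByEdge_of_mem_left (hHK : Disjoint H.verts K.verts) {v : V}
    (hv : v ∈ H.verts) :
    (H.joinByEdge K hpq).neighborSet v =
      H.neighborSet v ∪ (G.subgraphOfAdj hpq).neighborSet v := by
  have : K.neighborSet v = ∅ :=
    Set.eq_empty_of_forall_notMem fun w hw => Set.disjoint_left.mp hHK hv hw.fst_mem
  simp only [joinByEdge, neighborSet_sup, this, Set.union_empty]

lemma subdeg_joinByEdge_of_mem_left (hq : q ∈ K.verts) (hHK : Disjoint H.verts K.verts)
    {v : V} (hv : v ∈ H.verts) (hvp : v ≠ p) :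
    subdeg (H.joinByEdge K hpq) v = subdeg H v := by
  have hvq : v ≠ q := fun h => Set.disjoint_left.mp hHK hv (h ▸ hq)
  rw [subdeg_eq_ncard, subdeg_eq_ncard, neighborSet_joinByEdge_of_mem_left hpq hHK hv,
    neighborSet_subgraphOfAdj_of_ne_of_ne hpq hvp hvq, Set.union_empty]

lemma subdeg_joinByEdge_left [Finite V] (hp : p ∈ H.verts) (hq : q ∈ K.verts)
    (hHK : Disjoint H.verts K.verts) :
    subdeg (H.joinByEdge K hpq) p = subdeg H p + 1 := by
  rw [subdeg_eq_ncard, subdeg_eq_ncard, neighborSet_joinByEdge_of_mem_left hpq hHK hp,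
    neighborSet_fst_subgraphOfAdj, Set.union_singleton, Set.ncard_insert_of_notMem
      (fun h => Set.disjoint_right.mp hHK hq h.snd_mem)]

lemma subdeg_joinByEdge_of_mem_right (hp : p ∈ H.verts) (hHK : Disjoint H.verts K.verts)
    {v : V} (hv : v ∈ K.verts) (hvq : v ≠ q) :
    subdeg (H.joinByEdge K hpq) v = subdeg K v := by
  rw [joinByEdge_comm]
  exact subdeg_joinByEdge_of_mem_left hpq.symm hp hHK.symm hv hvq

lemma subdeg_joinByEdge_right [Finite V] (hp : p ∈ H.verts) (hq : q ∈ K.verts)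
    (hHK : Disjoint H.verts K.verts) :
    subdeg (H.joinByEdge K hpq) q = subdeg K q + 1 := by
  rw [joinByEdge_comm]
  exact subdeg_joinByEdge_left hpq.symm hq hp hHK.symm

end JoinByEdge

structure IsStarCenter (S : G.Subgraph) (c : V) : Prop where
  mem : c ∈ S.verts
  adj : ∀ v ∈ S.verts, v ≠ c → S.Adj c v
  eq_or_eq : ∀ ⦃x y⦄, S.Adj x y → x = c ∨ y = c

lemma _root_.IsStar.exists_isStarCenter [Finite V] {S : G.Subgraph} (hS : IsStar S)
    (hsize : 2 ≤ S.edgeSet.ncard) : ∃ c, IsStarCenter S c := by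
  have hconn : S.Connected := ((coe_isTree_iff S).mp hS.1).1
  have hcard : 3 ≤ S.verts.ncard := by rw [← ((coe_isTree_iff S).mp hS.1).2]; omega
  have hunique : ∀ ⦃x y⦄, x ∈ S.verts → 1 < subdeg S x → y ∈ S.verts → 1 < subdeg S y →
      x = y :=
    fun x y hx hx' hy hy' => hS.2 ⟨hx, hx'⟩ ⟨hy, hy'⟩
  obtain ⟨c, hc, hc'⟩ : ∃ c ∈ S.verts, 1 < subdeg S c := by
    obtain ⟨x, hx, y, hy, z, hz, hxy, hxz, hyz⟩ := (Set.two_lt_ncard).mp hcard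
    rcases adj_or_exists_one_lt_subdeg hconn hx hy hxy with hxy' | ⟨c, hc, hc'⟩
    · rcases adj_or_exists_one_lt_subdeg hconn hx hz hxz with hxz' | ⟨c, hc, hc'⟩
      · exact ⟨x, hx, one_lt_subdeg_of_adj_of_adj hxy' hxz' (Ne.symm hyz)⟩
      · exact ⟨c, hc.snd_mem, hc'⟩
    · exact ⟨c, hc.snd_mem, hc'⟩
  have hadj : ∀ v ∈ S.verts, v ≠ c → S.Adj c v := by
    intro v hv hvc
    rcases adj_or_exists_one_lt_subdeg hconn hv hc hvc with h | ⟨y, hy, hy'⟩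
    · exact h.symm
    · exact hunique hy.snd_mem hy' hc hc' ▸ hy.symm
  refine ⟨c, ⟨hc, hadj, fun x y hxy => or_iff_not_imp_left.mpr fun hxc => ?_⟩⟩
  by_contra hyc
  exact hxc (hunique hxy.fst_mem
    (one_lt_subdeg_of_adj_of_adj (hadj x hxy.fst_mem hxc).symm hxy hyc) hc hc')

namespace IsStarCenter

variable {S : G.Subgraph} {c : V}

lemma neighborSet_eq (hc : IsStarCenter S c) {v : V} (hv : v ∈ S.verts) (hvc : v ≠ c) :
    S.neighborSet v = {c} := by
  ext w
  refine ⟨fun h => (hc.eq_or_eq h).resolve_left hvc, ?_⟩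
  rintro rfl
  exact (hc.adj v hv hvc).symm

lemma subdeg_eq_one (hc : IsStarCenter S c) {v : V} (hv : v ∈ S.verts) (hvc : v ≠ c) :
    subdeg S v = 1 := by
  rw [subdeg_eq_ncard, hc.neighborSet_eq hv hvc, Set.ncard_singleton]

lemma subdeg_center [Finite V] (hc : IsStarCenter S c) (hS : S.coe.IsTree) :
    subdeg S c = S.edgeSet.ncard := by
  have hnbr : S.neighborSet c = S.verts \ {c} := by
    ext w
    exact ⟨fun h => ⟨h.snd_mem, fun hwc => h.ne (hwc ▸ rfl)⟩,
      fun ⟨hw, hwc⟩ => hc.adj w hw hwc⟩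
  rw [subdeg_eq_ncard, hnbr, Set.ncard_sdiff_singleton_of_mem hc.mem,
    ← ((coe_isTree_iff S).mp hS).2]
  rfl

lemma five_le_subdeg [Finite V] (hc : IsStarCenter S c) (hS : S.coe.IsTree)
    (hsize : 5 ≤ S.edgeSet.ncard) {J : G.Subgraph} (hSJ : S ≤ J) : 5 ≤ subdeg J c :=
  (hc.subdeg_center hS ▸ hsize).trans (subdeg_mono hSJ c)

lemma degree_conditions (hc : IsStarCenter S c) {J : G.Subgraph} (hJc : 5 ≤ subdeg J c)
    {y z : V} (h : S.Adj y z) :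
    ¬(subdeg J y = 2 ∧ subdeg J z = 2) ∧ (subdeg J y = 1 → 5 ≤ subdeg J z) := by
  rcases hc.eq_or_eq h with rfl | rfl <;> omega

lemma eq_of_adj (hc : IsStarCenter S c) (htf : G.CliqueFree 3) {u x : V} (hu : u ∈ S.verts)
    (huc : u ≠ c) (hx : x ∈ S.verts) (hux : G.Adj u x) : x = c := by
  classical
  by_contra hxc
  exact htf {c, u, x} (is3Clique_triple_iff.mpr ⟨S.adj_sub (hc.adj u hu huc),
    S.adj_sub (hc.adj x hx hxc), hux⟩)

end IsStarCenter

def NoAdjacentDegreeTwo (T : G.Subgraph) : Prop :=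
  ∀ a b : V, T.Adj a b → ¬(subdeg T a = 2 ∧ subdeg T b = 2)

def ExposedLeafCondition (T : G.Subgraph) : Prop :=
  ∀ a : V, subdeg T a = 1 → (∃ u, u ∉ T.verts ∧ G.Adj a u) → ∀ w, T.Adj a w → 5 ≤ subdeg T w

lemma joinByEdge_conditions [Finite V] {T K : G.Subgraph} {a u : V} (hau : G.Adj a u)
    (ha : a ∈ T.verts) (hu : u ∈ K.verts) (hTK : Disjoint T.verts K.verts)
    (h1 : NoAdjacentDegreeTwo T) (h3 : ExposedLeafCondition T) (ha1 : 1 ≤ subdeg T a)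
    (hK1 : ∀ y z, K.Adj y z → ¬(subdeg (T.joinByEdge K hau) y = 2 ∧
      subdeg (T.joinByEdge K hau) z = 2))
    (hK3 : ∀ y z, K.Adj y z → subdeg (T.joinByEdge K hau) y = 1 →
      5 ≤ subdeg (T.joinByEdge K hau) z)
    (hau2 : ¬(subdeg (T.joinByEdge K hau) a = 2 ∧ subdeg (T.joinByEdge K hau) u = 2))
    (hu1 : subdeg (T.joinByEdge K hau) u ≠ 1) :
    NoAdjacentDegreeTwo (T.joinByEdge K hau) ∧ ExposedLeafCondition (T.joinByEdge K hau) := by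
  set J := T.joinByEdge K hau
  have hdegT : ∀ v ∈ T.verts, v ≠ a → subdeg J v = subdeg T v :=
    fun v hv hva => subdeg_joinByEdge_of_mem_left hau hu hTK hv hva
  have hdega : subdeg J a = subdeg T a + 1 := subdeg_joinByEdge_left hau ha hu hTK
  have huT : u ∉ T.verts := Set.disjoint_right.mp hTK hu
  have hadjT : ∀ y z, J.Adj y z → y ∈ T.verts → y ≠ a → T.Adj y z := by
    intro y z h hy hya
    rcases (joinByEdge_adj hau).mp h with h | h | h
    · exact h
    · rcases Sym2.eq_iff.mp h with ⟨rfl, -⟩ | ⟨-, rfl⟩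
      exacts [absurd rfl hya, absurd hy huT]
    · exact absurd h.fst_mem (Set.disjoint_left.mp hTK hy)
  have hadjK : ∀ y z, J.Adj y z → y ∈ K.verts → y ≠ u → K.Adj y z := by
    intro y z h hy hyu
    rcases (joinByEdge_adj hau).mp h with h | h | h
    · exact absurd h.fst_mem (Set.disjoint_right.mp hTK hy)
    · rcases Sym2.eq_iff.mp h with ⟨rfl, -⟩ | ⟨-, rfl⟩
      exacts [absurd ha (Set.disjoint_right.mp hTK hy), absurd rfl hyu]
    · exact h
  -- if `a` is a leaf of `T`, then (3) applies to it because of its outside neighbour `u`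
  have hat : ∀ z, T.Adj a z → ¬(subdeg J a = 2 ∧ subdeg J z = 2) := by
    rintro z haz ⟨h2a, h2z⟩
    have hza : z ≠ a := (T.adj_sub haz).ne.symm
    have h5 := h3 a (by omega) ⟨u, huT, hau⟩ z haz
    rw [hdegT z haz.snd_mem hza] at h2z
    omega
  refine ⟨fun y z hyz => ?_, fun y hy1 ⟨x, hxJ, hyx⟩ z hyz => ?_⟩
  · rcases (joinByEdge_adj hau).mp hyz with h | h | h
    · by_cases hya : y = a
      · exact hya ▸ hat z (hya ▸ h)
      by_cases hza : z = a
      · exact fun hh => hat y (hza ▸ h.symm) ⟨hza ▸ hh.2, hh.1⟩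
      rw [hdegT y h.fst_mem hya, hdegT z h.snd_mem hza]
      exact h1 y z h
    · rcases Sym2.eq_iff.mp h with ⟨rfl, rfl⟩ | ⟨rfl, rfl⟩
      exacts [hau2, fun hh => hau2 ⟨hh.2, hh.1⟩]
    · exact hK1 y z h
  · rcases (joinByEdge_verts hau ha hu ▸ hyz.fst_mem : y ∈ T.verts ∪ K.verts) with hy | hy
    · have hya : y ≠ a := by rintro rfl; omega
      have hxT : x ∉ T.verts := fun h => hxJ (left_le_joinByEdge hau |>.1 h)
      exact (h3 y (hdegT y hy hya ▸ hy1) ⟨x, hxT, hyx⟩ z (hadjT y z hyz hy hya)).trans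
        (subdeg_mono (left_le_joinByEdge hau) z)
    · have hyu : y ≠ u := by rintro rfl; exact hu1 hy1
      exact hK3 y z (hadjK y z hyz hy hyu) hy1

section Admissible

variable {ι : Type*} {S : ι → G.Subgraph} {T : G.Subgraph}

/-- The trees satisfying conditions (1)–(3) of the statement. -/
structure IsAdmissible (S : ι → G.Subgraph) (T : G.Subgraph) : Prop where
  isTree : T.coe.IsTree
  noAdjacentDegreeTwo : NoAdjacentDegreeTwo T
  compl_eq : ∃ I : Set ι, T.vertsᶜ = ⋃ i ∈ I, (S i).verts
  exposedLeafCondition : ExposedLeafCondition T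

namespace IsAdmissible

lemma disjoint_of_notMem (hT : IsAdmissible S T)
    (hS : Pairwise fun i j => Disjoint (S i).verts (S j).verts) {i : ι} {u : V}
    (hu : u ∈ (S i).verts) (huT : u ∉ T.verts) : Disjoint T.verts (S i).verts := by
  obtain ⟨I, hI⟩ := hT.compl_eq
  exact Set.disjoint_right.mpr (Set.subset_compl_of_compl_eq_biUnion hS hI hu huT)

lemma one_le_subdeg [Finite V] (hT : IsAdmissible S T)
    (hS : Pairwise fun i j => Disjoint (S i).verts (S j).verts)
    (hcov : ∀ w : V, ∃ i, w ∈ (S i).verts) (hnt : ∀ i, (S i).verts.Nontrivial) {a : V}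
    (ha : a ∈ T.verts) : 1 ≤ subdeg T a := by
  obtain ⟨k, hak⟩ := hcov a
  obtain ⟨w, hwk, hwa⟩ := (hnt k).exists_ne a
  have hwT : w ∈ T.verts := by
    by_contra hwT
    exact Set.disjoint_left.mp (hT.disjoint_of_notMem hS hwk hwT) ha hak
  have hconn : T.Connected := ((coe_isTree_iff T).mp hT.isTree).1
  obtain ⟨y, hay⟩ : ∃ y, T.Adj a y := by
    rcases adj_or_exists_one_lt_subdeg hconn ha hwT hwa.symm with h | ⟨y, h, -⟩
    exacts [⟨w, h⟩, ⟨y, h⟩]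
  rw [subdeg_eq_ncard, Nat.one_le_iff_ne_zero, Ne, Set.ncard_eq_zero (Set.toFinite _)]
  exact Set.nonempty_iff_ne_empty.mp ⟨y, hay⟩

lemma joinByEdge [Finite V] (hT : IsAdmissible S T)
    (hS : Pairwise fun i j => Disjoint (S i).verts (S j).verts) {K : G.Subgraph} {a u : V}
    (hau : G.Adj a u) (ha : a ∈ T.verts) (hu : u ∈ K.verts) (hTK : Disjoint T.verts K.verts)
    (hK : K.coe.IsTree) (hKS : ∃ J : Set ι, K.verts = ⋃ j ∈ J, (S j).verts)
    (ha1 : 1 ≤ subdeg T a)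
    (hK1 : ∀ y z, K.Adj y z → ¬(subdeg (T.joinByEdge K hau) y = 2 ∧
      subdeg (T.joinByEdge K hau) z = 2))
    (hK3 : ∀ y z, K.Adj y z → subdeg (T.joinByEdge K hau) y = 1 →
      5 ≤ subdeg (T.joinByEdge K hau) z)
    (hau2 : ¬(subdeg (T.joinByEdge K hau) a = 2 ∧ subdeg (T.joinByEdge K hau) u = 2))
    (hu1 : subdeg (T.joinByEdge K hau) u ≠ 1) :
    IsAdmissible S (T.joinByEdge K hau) := by
  obtain ⟨h1, h3⟩ := joinByEdge_conditions hau ha hu hTK hT.noAdjacentDegreeTwo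
    hT.exposedLeafCondition ha1 hK1 hK3 hau2 hu1
  obtain ⟨I, hI⟩ := hT.compl_eq
  exact ⟨joinByEdge_isTree hau ha hu hTK hT.isTree hK, h1,
    joinByEdge_verts hau ha hu ▸ Set.exists_compl_union_eq_biUnion hS hI hKS, h3⟩

lemma subdeg_eq_one_and_ne_center [Finite V] (hT : IsAdmissible S T)
    (hmax : ∀ T', IsAdmissible S T' → T'.edgeSet.ncard ≤ T.edgeSet.ncard)
    (hS : Pairwise fun i j => Disjoint (S i).verts (S j).verts) {a u c : V} {i : ι}
    (hau : G.Adj a u) (ha : a ∈ T.verts) (ha1 : 1 ≤ subdeg T a) (hu : u ∈ (S i).verts)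
    (hTi : Disjoint T.verts (S i).verts) (hSi : (S i).coe.IsTree)
    (hsize : 5 ≤ (S i).edgeSet.ncard) (hc : IsStarCenter (S i) c) :
    subdeg T a = 1 ∧ u ≠ c := by
  by_contra hcon
  set J := T.joinByEdge (S i) hau
  have hJc : 5 ≤ subdeg J c := hc.five_le_subdeg hSi hsize (right_le_joinByEdge hau)
  have hJa : subdeg J a = subdeg T a + 1 := subdeg_joinByEdge_left hau ha hu hTi
  have hJu : subdeg J u = subdeg (S i) u + 1 := subdeg_joinByEdge_right hau ha hu hTi
  have hau2 : ¬(subdeg J a = 2 ∧ subdeg J u = 2) ∧ subdeg J u ≠ 1 := by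
    by_cases huc : u = c
    · subst huc
      omega
    · have hTa : subdeg T a ≠ 1 := fun h => hcon ⟨h, huc⟩
      have := hc.subdeg_eq_one hu huc
      omega
  have hJ : IsAdmissible S J :=
    hT.joinByEdge hS hau ha hu hTi hSi ⟨{i}, by simp⟩ ha1
      (fun y z h => (hc.degree_conditions hJc h).1)
      (fun y z h => (hc.degree_conditions hJc h).2)
      hau2.1 hau2.2
  exact absurd (hmax J hJ) (not_le.mpr (ncard_edgeSet_lt_joinByEdge hau hu hTi))

lemma mem_of_adj_of_notMem [Finite V] (hT : IsAdmissible S T)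
    (hmax : ∀ T', IsAdmissible S T' → T'.edgeSet.ncard ≤ T.edgeSet.ncard)
    (hS : Pairwise fun i j => Disjoint (S i).verts (S j).verts) (hstar : ∀ i, IsStar (S i))
    (hsize : ∀ i, 5 ≤ (S i).edgeSet.ncard) {a u c x : V} {i : ι}
    (hau : G.Adj a u) (ha : a ∈ T.verts) (ha1 : 1 ≤ subdeg T a) (hu : u ∈ (S i).verts)
    (hTi : Disjoint T.verts (S i).verts) (hc : IsStarCenter (S i) c) (huc : u ≠ c)
    (hux : G.Adj u x) (hxT : x ∉ T.verts) : x ∈ (S i).verts := by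
  by_contra hxi
  obtain ⟨I, hI⟩ := hT.compl_eq
  obtain ⟨j, -, hxj⟩ := Set.mem_iUnion₂.mp (show x ∈ ⋃ j ∈ I, (S j).verts from hI ▸ hxT)
  have hij : Disjoint (S i).verts (S j).verts := hS fun h => hxi (h ▸ hxj)
  have hTj := hT.disjoint_of_notMem hS hxj hxT
  obtain ⟨c', hc'⟩ := (hstar j).exists_isStarCenter (by linarith [hsize j])
  set K := (S i).joinByEdge (S j) hux
  have hKverts : K.verts = (S i).verts ∪ (S j).verts := joinByEdge_verts hux hu hxj
  have huK : u ∈ K.verts := hKverts ▸ Or.inl hu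
  have hxK : x ∈ K.verts := hKverts ▸ Or.inr hxj
  have hTK : Disjoint T.verts K.verts := hKverts ▸ Set.disjoint_union_right.mpr ⟨hTi, hTj⟩
  set J := T.joinByEdge K hau
  have hKJ : K ≤ J := right_le_joinByEdge hau
  have hJc : 5 ≤ subdeg J c :=
    hc.five_le_subdeg (hstar i).1 (hsize i) ((left_le_joinByEdge hux).trans hKJ)
  have hJc' : 5 ≤ subdeg J c' :=
    hc'.five_le_subdeg (hstar j).1 (hsize j) ((right_le_joinByEdge hux).trans hKJ)
  have hJu : subdeg J u = 3 := by
    rw [subdeg_joinByEdge_right hau ha huK hTK, subdeg_joinByEdge_left hux hu hxj hij,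
      hc.subdeg_eq_one hu huc]
  have hJx : 2 ≤ subdeg J x := by
    rw [subdeg_joinByEdge_of_mem_right hau ha hTK hxK (hux.ne.symm),
      subdeg_joinByEdge_right hux hu hxj hij]
    by_cases hxc : x = c'
    · subst hxc
      have := hc'.five_le_subdeg (hstar j).1 (hsize j) le_rfl
      omega
    · rw [hc'.subdeg_eq_one hxj hxc]
  have hKdeg : ∀ y z, K.Adj y z →
      ¬(subdeg J y = 2 ∧ subdeg J z = 2) ∧ (subdeg J y = 1 → 5 ≤ subdeg J z) := by
    intro y z h
    rcases (joinByEdge_adj hux).mp h with h | h | h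
    · exact hc.degree_conditions hJc h
    · rcases Sym2.eq_iff.mp h with ⟨rfl, rfl⟩ | ⟨rfl, rfl⟩ <;> omega
    · exact hc'.degree_conditions hJc' h
  have hJ : IsAdmissible S J :=
    hT.joinByEdge hS hau ha huK hTK (joinByEdge_isTree hux hu hxj hij (hstar i).1 (hstar j).1)
      ⟨{i, j}, by simp [hKverts]⟩ ha1 (fun y z h => (hKdeg y z h).1)
      (fun y z h => (hKdeg y z h).2) (by omega : ¬(subdeg J a = 2 ∧ subdeg J u = 2))
      (by omega : subdeg J u ≠ 1)
  exact absurd (hmax J hJ) (not_le.mpr (ncard_edgeSet_lt_joinByEdge hau huK hTK))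

end IsAdmissible

end Admissible

end SimpleGraph.Subgraph

theorem stmt_16 (V : Type) [Fintype V] (G : SimpleGraph V)
    (htf : G.CliqueFree 3)
    (m : ℕ) (S : Fin m → G.Subgraph)
    (hstar : ∀ i, IsStar (S i)) (hsize : ∀ i, 6 ≤ (S i).edgeSet.ncard)
    (hdisj : ∀ i j, i ≠ j → Disjoint (S i).verts (S j).verts)
    (hcov : ∀ w : V, ∃ i, w ∈ (S i).verts)
    (T : G.Subgraph) (hT : T.coe.IsTree)
    (h1 : ∀ a b : V, T.Adj a b → ¬(subdeg T a = 2 ∧ subdeg T b = 2))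
    (h2 : ∃ I : Set (Fin m), T.vertsᶜ = ⋃ i ∈ I, (S i).verts)
    (h3 : ∀ a : V, subdeg T a = 1 → (∃ u, u ∉ T.verts ∧ G.Adj a u) →
      ∀ w, T.Adj a w → 5 ≤ subdeg T w)
    (hmax : ∀ T' : G.Subgraph, T'.coe.IsTree →
      (∀ a b : V, T'.Adj a b → ¬(subdeg T' a = 2 ∧ subdeg T' b = 2)) →
      (∃ I : Set (Fin m), T'.vertsᶜ = ⋃ i ∈ I, (S i).verts) →
      (∀ a : V, subdeg T' a = 1 → (∃ u, u ∉ T'.verts ∧ G.Adj a u) →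
        ∀ w, T'.Adj a w → 5 ≤ subdeg T' w) →
      T'.edgeSet.ncard ≤ T.edgeSet.ncard)
    :
    ∀ a ∈ T.verts, ∀ u : V, G.Adj a u → u ∉ T.verts →
      subdeg T a = 1 ∧ (G.neighborSet u \ T.verts).ncard = 1 := by
  intro a ha u hau hu
  have hT' : Subgraph.IsAdmissible S T := ⟨hT, h1, h2, h3⟩
  have hmax' : ∀ T', Subgraph.IsAdmissible S T' → T'.edgeSet.ncard ≤ T.edgeSet.ncard :=
    fun T' h => hmax T' h.1 h.2 h.3 h.4
  have hsize' : ∀ i, 5 ≤ (S i).edgeSet.ncard := fun i => (hsize i).trans' (by norm_num)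
  have hnt : ∀ i, (S i).verts.Nontrivial := fun i => by
    rw [← Set.one_lt_ncard_iff_nontrivial, ← ((Subgraph.coe_isTree_iff _).mp (hstar i).1).2]
    linarith [hsize i]
  have ha1 := hT'.one_le_subdeg hdisj hcov hnt ha
  obtain ⟨i, hui⟩ := hcov u
  have hTi := hT'.disjoint_of_notMem hdisj hui hu
  obtain ⟨c, hc⟩ := (hstar i).exists_isStarCenter (by linarith [hsize i])
  obtain ⟨hdeg1, huc⟩ :=
    hT'.subdeg_eq_one_and_ne_center hmax' hdisj hau ha ha1 hui hTi (hstar i).1 (hsize' i) hc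
  have hnbr : G.neighborSet u \ T.verts = {c} := by
    ext x
    refine ⟨fun ⟨hux, hxT⟩ => hc.eq_of_adj htf hui huc
      (hT'.mem_of_adj_of_notMem hmax' hdisj hstar hsize' hau ha ha1 hui hTi hc huc hux hxT)
      hux, ?_⟩
    rintro rfl
    exact ⟨(S i).adj_sub (hc.adj u hui huc).symm, Set.disjoint_right.mp hTi hc.mem⟩
  exact ⟨hdeg1, by rw [hnbr, Set.ncard_singleton]⟩
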